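/- arXiv:1810.12030 — 2 statements merged into one kernel-verified Lean document; each statement's English description precedes it below -/
import Mathlib

section
/- Any real polynomial Q satisfying Q(1) ≥ 2/3, Q(p) ≤ 1/3, and Q(p^k) ∈ [0,1] for all k ∈ {0,1,…,n} has degree at least n/4. -/
open Polynomial Finset Lagrange

noncomputable def vv (p i : ℕ) : ℝ := (p:ℝ)^(4*i-3)
noncomputable def PP (p d i : ℕ) : ℝ := ∏ j ∈ (Finset.range (d+2)).erase i, |vv p i - vv p j|
lemma hp1R {p : ℕ} (hp : 2 ≤ p) : (1:ℝ) < p := by exact_mod_cast by omega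
lemma hp2R {p : ℕ} (hp : 2 ≤ p) : (2:ℝ) ≤ p := by exact_mod_cast hp
lemma vv_mono {p : ℕ} (hp : 2 ≤ p) : StrictMono (vv p) := by
  intro a b hab; apply pow_lt_pow_right₀ (hp1R hp); omega
lemma vv_pos {p : ℕ} (hp : 2 ≤ p) (i : ℕ) : 0 < vv p i := pow_pos (by have := hp1R hp; linarith) _
lemma vv_one_le {p : ℕ} (hp : 2 ≤ p) (i : ℕ) : 1 ≤ vv p i := one_le_pow₀ (by have := hp1R hp; linarith)
lemma vv_zero {p : ℕ} : vv p 0 = 1 := by simp [vv]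
lemma vv_one {p : ℕ} : vv p 1 = p := by simp [vv]
lemma weier (s : Finset ℕ) (a : ℕ → ℝ) (h0 : ∀ j ∈ s, 0 ≤ a j) (h1 : ∀ j ∈ s, a j ≤ 1) :
    1 - ∑ j ∈ s, a j ≤ ∏ j ∈ s, (1 - a j) := by
  classical
  induction s using Finset.induction with
  | empty => simp
  | @insert i s hx ih =>
    rw [Finset.sum_insert hx, Finset.prod_insert hx]
    have h0' : ∀ j ∈ s, 0 ≤ a j := fun j hj => h0 j (Finset.mem_insert_of_mem hj)
    have h1' : ∀ j ∈ s, a j ≤ 1 := fun j hj => h1 j (Finset.mem_insert_of_mem hj)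
    have ihs := ih h0' h1'
    have hai0 : 0 ≤ a i := h0 i (Finset.mem_insert_self _ _)
    have hai1 : a i ≤ 1 := h1 i (Finset.mem_insert_self _ _)
    have hs0 : 0 ≤ ∑ j ∈ s, a j := Finset.sum_nonneg h0'
    nlinarith [ihs, mul_nonneg hai0 hs0]
lemma geo_fwd (a b : ℕ) : ∑ j ∈ Finset.Ico a b, ((16:ℝ)⁻¹)^j ≤ (16⁻¹)^a * (16/15) := by
  rcases le_or_gt a b with h | h
  · rw [Finset.sum_Ico_eq_sum_range]
    have h2 : ∀ i, ((16:ℝ)⁻¹)^(a+i) = (16⁻¹)^a * (16⁻¹)^i := fun i => pow_add _ _ _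
    simp_rw [h2, ← Finset.mul_sum]
    have hge : ∑ i ∈ Finset.range (b-a), ((16:ℝ)⁻¹)^i ≤ 16/15 := by
      rw [geom_sum_eq (by norm_num), div_le_iff_of_neg (by norm_num)]
      have : ((16:ℝ)⁻¹)^(b-a) ≥ 0 := by positivity
      nlinarith
    have : (0:ℝ) ≤ (16⁻¹)^a := by positivity
    nlinarith
  · rw [Finset.Ico_eq_empty (by omega)]
    simp; positivity
lemma vv_sub_eq {p : ℕ} (hp : 2 ≤ p) {i j : ℕ} (hji : j < i) :
    vv p i - vv p j = vv p i * (1 - ((p:ℝ)^((4*i-3)-(4*j-3)))⁻¹) := by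
  have hp0 : (0:ℝ) < p := by have := hp1R hp; linarith
  have hkey : vv p j * (p:ℝ)^((4*i-3)-(4*j-3)) = vv p i := by
    rw [vv, vv, ← pow_add]; congr 1; omega
  have hne : ((p:ℝ)^((4*i-3)-(4*j-3))) ≠ 0 := by positivity
  rw [mul_sub, mul_one, ← hkey, mul_inv_cancel_right₀ hne]
lemma invp_le {p : ℕ} (hp : 2 ≤ p) {e t : ℕ} (h : 4*t ≤ e) :
    ((p:ℝ)^e)⁻¹ ≤ ((16:ℝ)⁻¹)^t := by
  have h2 : (16:ℝ)^t ≤ (p:ℝ)^e := by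
    calc (16:ℝ)^t = 2^(4*t) := by rw [pow_mul]; norm_num
    _ ≤ 2^e := pow_le_pow_right₀ (by norm_num) h
    _ ≤ (p:ℝ)^e := pow_le_pow_left₀ (by norm_num) (hp2R hp) e
  rw [inv_pow]
  exact inv_anti₀ (by positivity) h2

lemma PP0_eq {p : ℕ} (hp : 2 ≤ p) (d : ℕ) :
    PP p d 0 = ∏ j ∈ Finset.Ico 1 (d+2), (vv p j - 1) := by
  rw [PP, show (Finset.range (d+2)).erase 0 = Finset.Ico 1 (d+2) by
    ext j; simp [Finset.mem_erase, Finset.mem_range, Finset.mem_Ico]; omega]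
  refine Finset.prod_congr rfl fun j hj => ?_
  rw [Finset.mem_Ico] at hj
  rw [vv_zero, abs_sub_comm, abs_of_pos]
  have := vv_mono hp (show 0 < j by omega)
  rw [vv_zero] at this; linarith

lemma E1 {p : ℕ} (hp : 2 ≤ p) (d : ℕ) : PP p d 0 ≤ 15/13 * PP p d 1 := by
  have hmono := vv_mono hp
  have hpR := hp1R hp
  have h0 : PP p d 0 = ((p:ℝ)-1) * ∏ j ∈ Finset.Ico 2 (d+2), (vv p j - 1) := by
    rw [PP0_eq hp, show Finset.Ico 1 (d+2) = insert 1 (Finset.Ico 2 (d+2)) by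
      ext j; simp [Finset.mem_Ico]; omega, Finset.prod_insert (by simp), vv_one]
  have h1 : PP p d 1 = ((p:ℝ)-1) * ∏ j ∈ Finset.Ico 2 (d+2), (vv p j - p) := by
    rw [PP, show (Finset.range (d+2)).erase 1 = insert 0 (Finset.Ico 2 (d+2)) by
      ext j; simp [Finset.mem_erase, Finset.mem_range, Finset.mem_Ico]; omega,
      Finset.prod_insert (by simp)]
    congr 1
    · rw [vv_one, vv_zero, abs_of_pos]; linarith
    refine Finset.prod_congr rfl fun j hj => ?_
    rw [Finset.mem_Ico] at hj
    rw [vv_one, abs_sub_comm, abs_of_pos]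
    have := hmono (show 1 < j by omega); rw [vv_one] at this; linarith
  set a : ℕ → ℝ := fun j => ((p:ℝ)^(4*j-4))⁻¹ with ha
  have ha0 : ∀ j ∈ Finset.Ico 2 (d+2), 0 ≤ a j := fun j hj => by positivity
  have ha1 : ∀ j ∈ Finset.Ico 2 (d+2), a j ≤ 1 := fun j hj =>
    inv_le_one_of_one_le₀ (one_le_pow₀ (by linarith))
  have hsum : ∑ j ∈ Finset.Ico 2 (d+2), a j ≤ 2/15 := by
    have step : ∀ j ∈ Finset.Ico 2 (d+2), a j ≤ 16 * ((16:ℝ)⁻¹)^j := by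
      intro j hj
      rw [Finset.mem_Ico] at hj
      obtain ⟨t, rfl⟩ : ∃ t, j = t+1 := ⟨j-1, by omega⟩
      have h := invp_le hp (show 4*t ≤ 4*(t+1)-4 by omega)
      calc a (t+1) ≤ ((16:ℝ)⁻¹)^t := h
      _ = 16 * ((16:ℝ)⁻¹)^(t+1) := by rw [pow_succ]; ring_nf
    calc ∑ j ∈ Finset.Ico 2 (d+2), a j ≤ ∑ j ∈ Finset.Ico 2 (d+2), 16 * ((16:ℝ)⁻¹)^j :=
          Finset.sum_le_sum step
    _ = 16 * ∑ j ∈ Finset.Ico 2 (d+2), ((16:ℝ)⁻¹)^j := by rw [Finset.mul_sum]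
    _ ≤ 16 * (((16:ℝ)⁻¹)^2 * (16/15)) := by
          have := geo_fwd 2 (d+2); nlinarith
    _ ≤ 2/15 := by norm_num
  have hW := weier (Finset.Ico 2 (d+2)) a ha0 ha1
  have hfac : ∀ j ∈ Finset.Ico 2 (d+2), (1 - a j) * (vv p j - 1) ≤ vv p j - p := by
    intro j hj
    have hj' := Finset.mem_Ico.1 hj
    have h := vv_sub_eq hp (show (1:ℕ) < j by omega)
    rw [vv_one] at h
    have he : (4*j-3)-(4*1-3) = 4*j-4 := by omega
    rw [he] at h
    rw [h, mul_comm]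
    have hv1 := vv_one_le hp j
    have := ha1 j hj
    nlinarith
  have hX0 : (0:ℝ) ≤ ∏ j ∈ Finset.Ico 2 (d+2), (vv p j - 1) := by
    apply Finset.prod_nonneg; intro j hj
    have := vv_one_le hp j; linarith
  have hprod : (∏ j ∈ Finset.Ico 2 (d+2), (1 - a j)) * ∏ j ∈ Finset.Ico 2 (d+2), (vv p j - 1)
      ≤ ∏ j ∈ Finset.Ico 2 (d+2), (vv p j - p) := by
    rw [← Finset.prod_mul_distrib]
    apply Finset.prod_le_prod
    · intro j hj
      have := ha1 j hj; have := ha0 j hj; have := vv_one_le hp j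
      nlinarith
    · exact hfac
  have hZX : (13:ℝ)/15 * ∏ j ∈ Finset.Ico 2 (d+2), (vv p j - 1)
      ≤ ∏ j ∈ Finset.Ico 2 (d+2), (vv p j - p) := by
    nlinarith [mul_le_mul_of_nonneg_right (show (13:ℝ)/15 ≤ ∏ j ∈ Finset.Ico 2 (d+2), (1 - a j) by linarith) hX0]
  rw [h0, h1]
  nlinarith [mul_le_mul_of_nonneg_left hZX (show (0:ℝ) ≤ (p:ℝ)-1 by linarith)]
lemma invp_le8 {p : ℕ} (hp : 2 ≤ p) {e t : ℕ} (h : 4*t ≤ e + 3) (ht : 1 ≤ t) :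
    ((p:ℝ)^e)⁻¹ ≤ 8 * ((16:ℝ)⁻¹)^t := by
  have h8 : (8:ℝ) * ((16:ℝ)⁻¹)^t = ((16:ℝ)^t/8)⁻¹ := by
    rw [inv_div, inv_pow]; ring
  have h2 : (16:ℝ)^t/8 ≤ (p:ℝ)^e := by
    calc (16:ℝ)^t/8 = 2^(4*t)/2^3 := by rw [pow_mul]; norm_num
    _ = 2^(4*t-3) := by
          rw [div_eq_iff (by norm_num : ((2:ℝ)^3) ≠ 0), ← pow_add]
          congr 1; omega
    _ ≤ 2^e := pow_le_pow_right₀ (by norm_num) (by omega)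
    _ ≤ (p:ℝ)^e := pow_le_pow_left₀ (by norm_num) (hp2R hp) e
  rw [h8]
  exact inv_anti₀ (by positivity) h2

lemma geo_tail (i : ℕ) : ∑ j ∈ Finset.range i, ((16:ℝ)⁻¹)^(i-j) ≤ 1/15 := by
  induction i with
  | zero => simp
  | succ i ih =>
    rw [Finset.sum_range_succ]
    have h1 : ∑ j ∈ Finset.range i, ((16:ℝ)⁻¹)^(i+1-j) =
        16⁻¹ * ∑ j ∈ Finset.range i, ((16:ℝ)⁻¹)^(i-j) := by
      rw [Finset.mul_sum]
      refine Finset.sum_congr rfl fun j hj => ?_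
      rw [Finset.mem_range] at hj
      rw [show i+1-j = (i-j)+1 by omega, pow_succ]
      ring
    rw [h1, show i+1-i = 1 by omega]
    nlinarith [ih]

set_option maxHeartbeats 1000000 in
lemma E2 {p : ℕ} (hp : 2 ≤ p) {d i : ℕ} (hi2 : 2 ≤ i) (hid : i ≤ d+1) :
    PP p d 0 ≤ 5/2 * ((16:ℝ)⁻¹)^(i-1) * PP p d i := by
  have hmono := vv_mono hp
  have hpR := hp1R hp
  -- split PP i
  have hsplit : (Finset.range (d+2)).erase i = (Finset.range i) ∪ Finset.Ico (i+1) (d+2) := by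
    ext j; simp [Finset.mem_erase, Finset.mem_range, Finset.mem_Ico, Finset.mem_union]; omega
  have hdisj : Disjoint (Finset.range i) (Finset.Ico (i+1) (d+2)) := by
    rw [Finset.disjoint_left]; intro a ha hb
    rw [Finset.mem_range] at ha; rw [Finset.mem_Ico] at hb; omega
  have hPPi : PP p d i = (∏ j ∈ Finset.range i, (vv p i - vv p j)) *
      ∏ j ∈ Finset.Ico (i+1) (d+2), (vv p j - vv p i) := by
    rw [PP, hsplit, Finset.prod_union hdisj]
    congr 1
    · refine Finset.prod_congr rfl fun j hj => ?_
      rw [Finset.mem_range] at hj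
      exact abs_of_pos (sub_pos.2 (hmono hj))
    · refine Finset.prod_congr rfl fun j hj => ?_
      rw [Finset.mem_Ico] at hj
      rw [abs_sub_comm]
      exact abs_of_pos (sub_pos.2 (hmono (by omega)))
  -- lower bound for the left product
  set c : ℕ → ℝ := fun j => ((p:ℝ)^((4*i-3)-(4*j-3)))⁻¹ with hc
  have hc0 : ∀ j ∈ Finset.range i, 0 ≤ c j := fun j hj =>
    inv_nonneg.2 (pow_nonneg (by linarith) _)
  have hc1 : ∀ j ∈ Finset.range i, c j ≤ 1 := fun j hj =>
    inv_le_one_of_one_le₀ (one_le_pow₀ (by linarith))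
  have hcsum : ∑ j ∈ Finset.range i, c j ≤ 8/15 := by
    have step : ∀ j ∈ Finset.range i, c j ≤ 8 * ((16:ℝ)⁻¹)^(i-j) := by
      intro j hj
      rw [Finset.mem_range] at hj
      exact invp_le8 hp (by omega) (by omega)
    calc ∑ j ∈ Finset.range i, c j ≤ ∑ j ∈ Finset.range i, 8 * ((16:ℝ)⁻¹)^(i-j) :=
          Finset.sum_le_sum step
    _ = 8 * ∑ j ∈ Finset.range i, ((16:ℝ)⁻¹)^(i-j) := by rw [Finset.mul_sum]
    _ ≤ 8/15 := by have := geo_tail i; linarith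
  have hA : (7:ℝ)/15 * vv p i ^ i ≤ ∏ j ∈ Finset.range i, (vv p i - vv p j) := by
    have heq : ∏ j ∈ Finset.range i, (vv p i - vv p j) =
        vv p i ^ i * ∏ j ∈ Finset.range i, (1 - c j) := by
      rw [show vv p i ^ i = ∏ _j ∈ Finset.range i, vv p i by
            rw [Finset.prod_const, Finset.card_range], ← Finset.prod_mul_distrib]
      refine Finset.prod_congr rfl fun j hj => ?_
      rw [Finset.mem_range] at hj
      exact vv_sub_eq hp hj
    rw [heq]
    have hW := weier (Finset.range i) c hc0 hc1
    have hV : (0:ℝ) ≤ vv p i ^ i := pow_nonneg (le_of_lt (vv_pos hp i)) i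
    nlinarith [hW, hcsum, hV]
  -- lower bound for the right product
  set e : ℕ → ℝ := fun j => ((p:ℝ)^((4*j-3)-(4*i-3)))⁻¹ with he
  have he0 : ∀ j ∈ Finset.Ico (i+1) (d+2), 0 ≤ e j := fun j hj =>
    inv_nonneg.2 (pow_nonneg (by linarith) _)
  have he1 : ∀ j ∈ Finset.Ico (i+1) (d+2), e j ≤ 1 := fun j hj =>
    inv_le_one_of_one_le₀ (one_le_pow₀ (by linarith))
  have hesum : ∑ j ∈ Finset.Ico (i+1) (d+2), e j ≤ 1/15 := by
    have step : ∀ j ∈ Finset.Ico (i+1) (d+2), e j ≤ 16^i * ((16:ℝ)⁻¹)^j := by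
      intro j hj
      rw [Finset.mem_Ico] at hj
      have h1 : e j ≤ ((16:ℝ)⁻¹)^(j-i) := invp_le hp (by omega)
      have h2 : ((16:ℝ)⁻¹)^(j-i) * (16⁻¹)^i = (16⁻¹)^j := by rw [← pow_add]; congr 1; omega
      have h16 : (16:ℝ)^i * (16⁻¹)^i = 1 := by rw [← mul_pow]; norm_num
      have h3 : ((16:ℝ)⁻¹)^(j-i) = 16^i * (16⁻¹)^j := by
        calc ((16:ℝ)⁻¹)^(j-i) = (16⁻¹)^(j-i) * ((16:ℝ)^i * (16⁻¹)^i) := by rw [h16, mul_one]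
        _ = 16^i * (((16:ℝ)⁻¹)^(j-i) * (16⁻¹)^i) := by ring
        _ = 16^i * (16⁻¹)^j := by rw [h2]
      linarith [h1, h3.symm.le]
    calc ∑ j ∈ Finset.Ico (i+1) (d+2), e j
        ≤ ∑ j ∈ Finset.Ico (i+1) (d+2), 16^i * ((16:ℝ)⁻¹)^j := Finset.sum_le_sum step
    _ = 16^i * ∑ j ∈ Finset.Ico (i+1) (d+2), ((16:ℝ)⁻¹)^j := by rw [Finset.mul_sum]
    _ ≤ 16^i * (((16:ℝ)⁻¹)^(i+1) * (16/15)) := by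
          have := geo_fwd (i+1) (d+2)
          have : (0:ℝ) ≤ (16:ℝ)^i := by positivity
          nlinarith [geo_fwd (i+1) (d+2)]
    _ = 1/15 := by
          have h16 : (16:ℝ)^i * (16⁻¹)^i = 1 := by rw [← mul_pow]; norm_num
          rw [pow_succ]
          linear_combination (16⁻¹ * (16/15)) * h16
  have hWpos : (0:ℝ) ≤ ∏ j ∈ Finset.Ico (i+1) (d+2), vv p j :=
    Finset.prod_nonneg fun j hj => le_of_lt (vv_pos hp j)
  have hB : (14:ℝ)/15 * ∏ j ∈ Finset.Ico (i+1) (d+2), vv p j ≤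
      ∏ j ∈ Finset.Ico (i+1) (d+2), (vv p j - vv p i) := by
    have heq : ∏ j ∈ Finset.Ico (i+1) (d+2), (vv p j - vv p i) =
        (∏ j ∈ Finset.Ico (i+1) (d+2), vv p j) * ∏ j ∈ Finset.Ico (i+1) (d+2), (1 - e j) := by
      rw [← Finset.prod_mul_distrib]
      refine Finset.prod_congr rfl fun j hj => ?_
      rw [Finset.mem_Ico] at hj
      exact vv_sub_eq hp (by omega)
    rw [heq]
    have hW := weier (Finset.Ico (i+1) (d+2)) e he0 he1
    nlinarith [hW, hesum, hWpos]
  -- upper bound for PP 0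
  have hC : ∏ j ∈ Finset.Ico 1 (i+1), vv p j ≤ ((16:ℝ)⁻¹)^(i-1) * vv p i ^ i := by
    set D : ℝ := ∏ j ∈ Finset.Ico 1 (i+1), (p:ℝ)^((4*i-3)-(4*j-3)) with hD
    have hDpos : 0 < D := Finset.prod_pos fun j hj => pow_pos (by linarith) _
    have hkey : (∏ j ∈ Finset.Ico 1 (i+1), vv p j) * D = vv p i ^ i := by
      rw [hD, ← Finset.prod_mul_distrib,
        show vv p i ^ i = ∏ _j ∈ Finset.Ico 1 (i+1), vv p i by
          rw [Finset.prod_const, Nat.card_Ico]; congr 1]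
      refine Finset.prod_congr rfl fun j hj => ?_
      rw [Finset.mem_Ico] at hj
      rw [vv, vv, ← pow_add]; congr 1; omega
    have hDge : (16:ℝ)^(i-1) ≤ D := by
      have hmem : 1 ∈ Finset.Ico 1 (i+1) := by rw [Finset.mem_Ico]; omega
      rw [hD, ← Finset.mul_prod_erase _ _ hmem]
      have hrest : (1:ℝ) ≤ ∏ j ∈ (Finset.Ico 1 (i+1)).erase 1, (p:ℝ)^((4*i-3)-(4*j-3)) := by
        have := Finset.prod_le_prod (s := (Finset.Ico 1 (i+1)).erase 1)
          (f := fun _ => (1:ℝ)) (g := fun j => (p:ℝ)^((4*i-3)-(4*j-3)))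
          (fun j hj => zero_le_one) (fun j hj => one_le_pow₀ (by linarith : (1:ℝ) ≤ (p:ℝ)))
        simpa using this
      have hf1 : (16:ℝ)^(i-1) ≤ (p:ℝ)^((4*i-3)-(4*1-3)) := by
        calc (16:ℝ)^(i-1) = 2^(4*(i-1)) := by rw [pow_mul]; norm_num
        _ ≤ 2^((4*i-3)-(4*1-3)) := pow_le_pow_right₀ (by norm_num) (by omega)
        _ ≤ (p:ℝ)^((4*i-3)-(4*1-3)) := pow_le_pow_left₀ (by norm_num) (hp2R hp) _
      nlinarith [hf1, hrest, pow_pos (show (0:ℝ) < p by linarith) ((4*i-3)-(4*1-3))]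
    have h16pos : (0:ℝ) < (16:ℝ)^(i-1) := by positivity
    have heqd : ∏ j ∈ Finset.Ico 1 (i+1), vv p j = vv p i ^ i / D := by
      rw [eq_div_iff (ne_of_gt hDpos)]; exact hkey
    rw [heqd]
    calc vv p i ^ i / D ≤ vv p i ^ i / (16:ℝ)^(i-1) :=
          div_le_div_of_nonneg_left (pow_nonneg (le_of_lt (vv_pos hp i)) i) h16pos hDge
    _ = ((16:ℝ)⁻¹)^(i-1) * vv p i ^ i := by rw [div_eq_mul_inv, inv_pow]; ring
  have hP0 : PP p d 0 ≤ (∏ j ∈ Finset.Ico 1 (i+1), vv p j) *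
      ∏ j ∈ Finset.Ico (i+1) (d+2), vv p j := by
    have h1 : PP p d 0 ≤ ∏ j ∈ Finset.Ico 1 (d+2), vv p j := by
      rw [PP0_eq hp]
      apply Finset.prod_le_prod
      · intro j hj; linarith [vv_one_le hp j]
      · intro j hj; linarith [vv_one_le hp j]
    rwa [← Finset.prod_Ico_consecutive (fun j => vv p j)
      (by omega : 1 ≤ i+1) (by omega : i+1 ≤ d+2)] at h1
  -- assemble
  have hVpos : (0:ℝ) < vv p i ^ i := pow_pos (vv_pos hp i) i
  have h16pos : (0:ℝ) < ((16:ℝ)⁻¹)^(i-1) := by positivity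
  have hP0b : PP p d 0 ≤ ((16:ℝ)⁻¹)^(i-1) * vv p i ^ i * ∏ j ∈ Finset.Ico (i+1) (d+2), vv p j :=
    le_trans hP0 (mul_le_mul_of_nonneg_right hC hWpos)
  have hApos : (0:ℝ) ≤ ∏ j ∈ Finset.range i, (vv p i - vv p j) := by
    refine le_trans ?_ hA
    have := mul_nonneg hVpos.le hWpos
    nlinarith [hVpos]
  have hprod : (98:ℝ)/225 * (vv p i ^ i * ∏ j ∈ Finset.Ico (i+1) (d+2), vv p j) ≤
      (∏ j ∈ Finset.range i, (vv p i - vv p j)) * ∏ j ∈ Finset.Ico (i+1) (d+2), (vv p j - vv p i) := by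
    have hmm := mul_le_mul hA hB (by nlinarith [hWpos]) hApos
    nlinarith [hmm]
  rw [hPPi]
  have hstep1 : (5:ℝ)/2 * ((16:ℝ)⁻¹)^(i-1) * ((98:ℝ)/225 * (vv p i ^ i * ∏ j ∈ Finset.Ico (i+1) (d+2), vv p j)) ≤
      (5:ℝ)/2 * ((16:ℝ)⁻¹)^(i-1) * ((∏ j ∈ Finset.range i, (vv p i - vv p j)) * ∏ j ∈ Finset.Ico (i+1) (d+2), (vv p j - vv p i)) :=
    mul_le_mul_of_nonneg_left hprod (by positivity)
  have hGVW : (0:ℝ) ≤ ((16:ℝ)⁻¹)^(i-1) * vv p i ^ i * ∏ j ∈ Finset.Ico (i+1) (d+2), vv p j :=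
    mul_nonneg (mul_nonneg h16pos.le hVpos.le) hWpos
  nlinarith [hstep1, hGVW, hP0b]
lemma vv_def {p i : ℕ} : vv p i = (p:ℝ)^(4*i-3) := rfl

lemma coeff_basis_top {F : Type*} [Field F] {ι : Type*} [DecidableEq ι]
    {s : Finset ι} {v : ι → F} (hvs : Set.InjOn v s) {i : ι} (hi : i ∈ s) :
    (Lagrange.basis s v i).coeff (#s - 1) = Lagrange.nodalWeight s v i := by
  have hnd := Lagrange.natDegree_basis hvs hi
  have h : (Lagrange.basis s v i).coeff (#s - 1) = (Lagrange.basis s v i).leadingCoeff := by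
    rw [leadingCoeff, hnd]
  rw [h, Lagrange.basis, leadingCoeff_prod, Lagrange.nodalWeight]
  refine Finset.prod_congr rfl fun j hj => ?_
  rw [Lagrange.basisDivisor, leadingCoeff_mul, leadingCoeff_C, leadingCoeff_X_sub_C, mul_one]

lemma divdiff_zero {F : Type*} [Field F] {ι : Type*} [DecidableEq ι] (s : Finset ι) (v : ι → F)
    (hvs : Set.InjOn v s) (f : F[X]) (hf : f.natDegree + 2 ≤ #s) :
    ∑ i ∈ s, f.eval (v i) * Lagrange.nodalWeight s v i = 0 := by
  have hdeg : f.degree < (#s : ℕ) := by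
    apply lt_of_le_of_lt degree_le_natDegree
    exact_mod_cast Nat.lt_of_lt_of_le (by omega) le_rfl
  have heq := Lagrange.eq_interpolate hvs hdeg
  have h2 : f.coeff (#s - 1) = ∑ i ∈ s, f.eval (v i) * Lagrange.nodalWeight s v i := by
    conv_lhs => rw [heq]
    rw [Lagrange.interpolate_apply, finset_sum_coeff]
    refine Finset.sum_congr rfl fun i hi => ?_
    rw [coeff_C_mul, coeff_basis_top hvs hi]
  rw [← h2, coeff_eq_zero_of_natDegree_lt (by omega)]

lemma PP_pos {p : ℕ} (hp : 2 ≤ p) (d i : ℕ) : 0 < PP p d i := by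
  apply Finset.prod_pos
  intro j hj
  rw [abs_pos, sub_ne_zero]
  exact fun h => (Finset.mem_erase.1 hj).1 (((vv_mono hp).injective h).symm)

lemma nodal_sign {p d : ℕ} (hp : 2 ≤ p) {i : ℕ} (hi : i ∈ Finset.range (d+2)) :
    Lagrange.nodalWeight (Finset.range (d+2)) (vv p) i = (-1:ℝ)^(d+1-i) * (PP p d i)⁻¹ := by
  have hmono := vv_mono hp
  rw [Finset.mem_range] at hi
  have hsplit : (Finset.range (d+2)).erase i = (Finset.range i) ∪ Finset.Ico (i+1) (d+2) := by
    ext j; simp [Finset.mem_erase, Finset.mem_range, Finset.mem_Ico, Finset.mem_union]; omega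
  have hdisj : Disjoint (Finset.range i) (Finset.Ico (i+1) (d+2)) := by
    rw [Finset.disjoint_left]; intro a ha hb
    rw [Finset.mem_range] at ha; rw [Finset.mem_Ico] at hb; omega
  have hprod : ∏ j ∈ (Finset.range (d+2)).erase i, (vv p i - vv p j)
      = (-1:ℝ)^(d+1-i) * PP p d i := by
    rw [PP, hsplit, Finset.prod_union hdisj, Finset.prod_union hdisj]
    have hleft : ∏ j ∈ Finset.range i, (vv p i - vv p j)
        = ∏ j ∈ Finset.range i, |vv p i - vv p j| := by
      refine Finset.prod_congr rfl fun j hj => ?_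
      rw [Finset.mem_range] at hj
      rw [abs_of_pos (sub_pos.2 (hmono hj))]
    have hright : ∏ j ∈ Finset.Ico (i+1) (d+2), (vv p i - vv p j)
        = (-1:ℝ)^(d+1-i) * ∏ j ∈ Finset.Ico (i+1) (d+2), |vv p i - vv p j| := by
      have : ∀ j ∈ Finset.Ico (i+1) (d+2), vv p i - vv p j = -1 * |vv p i - vv p j| := by
        intro j hj
        rw [Finset.mem_Ico] at hj
        rw [abs_of_neg (sub_neg.2 (hmono (by omega : i < j)))]
        ring
      rw [Finset.prod_congr rfl this, Finset.prod_mul_distrib, Finset.prod_const, Nat.card_Ico,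
        show d+2-(i+1) = d+1-i by omega]
    rw [hleft, hright]
    ring
  rw [Lagrange.nodalWeight, Finset.prod_inv_distrib, hprod, mul_inv, ← inv_pow, inv_neg, inv_one]

theorem stmt_9 (p n : ℕ) (hp : 2 ≤ p) (hn : 1 ≤ n) (Q : Polynomial ℝ)
    (h1 : Q.eval 1 ≥ 2 / 3) (hp1 : Q.eval (p : ℝ) ≤ 1 / 3)
    (hbound : ∀ k : ℕ, k ≤ n → Q.eval ((p : ℝ) ^ k) ∈ Set.Icc (0 : ℝ) 1) :
    (n : ℝ) / 4 ≤ Q.natDegree := by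
  by_contra hcon
  push_neg at hcon
  set d := Q.natDegree with hd
  have hn4 : 4*d + 1 ≤ n := by
    have h4 : (4*d:ℝ) < n := by push_cast; linarith
    have : 4*d < n := by exact_mod_cast h4
    omega
  have hmono := vv_mono hp
  have hPpos := PP_pos hp d
  have hinj : Set.InjOn (vv p) (Finset.range (d+2)) := fun a _ b _ h => hmono.injective h
  have hid := divdiff_zero (Finset.range (d+2)) (vv p) hinj Q
    (by rw [Finset.card_range])
  -- reorient signs
  have hid2 : ∑ i ∈ Finset.range (d+2), (-1:ℝ)^i * (Q.eval (vv p i) * (PP p d i)⁻¹) = 0 := by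
    have heq : ∑ i ∈ Finset.range (d+2), (-1:ℝ)^i * (Q.eval (vv p i) * (PP p d i)⁻¹)
        = (-1:ℝ)^(d+1) * ∑ i ∈ Finset.range (d+2),
            Q.eval (vv p i) * Lagrange.nodalWeight (Finset.range (d+2)) (vv p) i := by
      rw [Finset.mul_sum]
      refine Finset.sum_congr rfl fun i hi => ?_
      rw [nodal_sign hp hi]
      have hile : i ≤ d+1 := by rw [Finset.mem_range] at hi; omega
      have hpowadd : (-1:ℝ)^(d+1) = (-1)^(d+1-i) * (-1)^i := by
        rw [← pow_add]; congr 1; omega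
      have hsq : (-1:ℝ)^(d+1-i) * (-1)^(d+1-i) = 1 := by
        rw [← pow_add, ← two_mul, pow_mul]; norm_num
      rw [hpowadd]
      linear_combination (-((-1:ℝ)^i * Q.eval (vv p i) * (PP p d i)⁻¹)) * hsq
    rw [heq, hid, mul_zero]
  -- split the sum
  have hsplit : (Q.eval 1 * (PP p d 0)⁻¹ - Q.eval (p:ℝ) * (PP p d 1)⁻¹)
      + ∑ i ∈ Finset.Ico 2 (d+2), (-1:ℝ)^i * (Q.eval (vv p i) * (PP p d i)⁻¹) = 0 := by
    rw [Finset.range_eq_Ico,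
      ← Finset.sum_Ico_consecutive _ (by omega : (0:ℕ) ≤ 2) (by omega : 2 ≤ d+2)] at hid2
    have h01 : ∑ i ∈ Finset.Ico 0 2, (-1:ℝ)^i * (Q.eval (vv p i) * (PP p d i)⁻¹)
        = Q.eval 1 * (PP p d 0)⁻¹ - Q.eval (p:ℝ) * (PP p d 1)⁻¹ := by
      rw [show Finset.Ico 0 2 = Finset.range 2 by rw [Finset.range_eq_Ico],
        Finset.sum_range_succ, Finset.sum_range_one, vv_zero, vv_one]
      ring
    rw [h01] at hid2
    exact hid2
  -- bound the tail terms
  have htail : ∀ i ∈ Finset.Ico 2 (d+2),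
      -((-1:ℝ)^i * (Q.eval (vv p i) * (PP p d i)⁻¹)) ≤ (PP p d i)⁻¹ := by
    intro i hi
    rw [Finset.mem_Ico] at hi
    have hQ : Q.eval ((p:ℝ)^(4*i-3)) ∈ Set.Icc (0:ℝ) 1 := hbound (4*i-3) (by omega)
    rw [← vv_def] at hQ
    have hPinv : (0:ℝ) ≤ (PP p d i)⁻¹ := (inv_nonneg).2 (hPpos i).le
    have hx0 : 0 ≤ Q.eval (vv p i) * (PP p d i)⁻¹ := mul_nonneg hQ.1 hPinv
    calc -((-1:ℝ)^i * (Q.eval (vv p i) * (PP p d i)⁻¹))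
        ≤ |(-1:ℝ)^i * (Q.eval (vv p i) * (PP p d i)⁻¹)| := neg_le_abs _
    _ = Q.eval (vv p i) * (PP p d i)⁻¹ := by
        rw [abs_mul, abs_pow, abs_neg, abs_one, one_pow, one_mul, abs_of_nonneg hx0]
    _ ≤ 1 * (PP p d i)⁻¹ := mul_le_mul_of_nonneg_right hQ.2 hPinv
    _ = (PP p d i)⁻¹ := one_mul _
  -- main inequality
  have hmain : Q.eval 1 * (PP p d 0)⁻¹ - Q.eval (p:ℝ) * (PP p d 1)⁻¹
      ≤ ∑ i ∈ Finset.Ico 2 (d+2), (PP p d i)⁻¹ := by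
    have hneg : Q.eval 1 * (PP p d 0)⁻¹ - Q.eval (p:ℝ) * (PP p d 1)⁻¹
        = ∑ i ∈ Finset.Ico 2 (d+2), -((-1:ℝ)^i * (Q.eval (vv p i) * (PP p d i)⁻¹)) := by
      rw [Finset.sum_neg_distrib]
      linarith [hsplit]
    rw [hneg]
    exact Finset.sum_le_sum htail
  -- bound pieces
  have hP0inv : (0:ℝ) < (PP p d 0)⁻¹ := inv_pos.2 (hPpos 0)
  have hB0 : 2/3 * (PP p d 0)⁻¹ ≤ Q.eval 1 * (PP p d 0)⁻¹ :=
    mul_le_mul_of_nonneg_right h1 hP0inv.le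
  have hB1 : Q.eval (p:ℝ) * (PP p d 1)⁻¹ ≤ 1/3 * (PP p d 1)⁻¹ :=
    mul_le_mul_of_nonneg_right hp1 (inv_pos.2 (hPpos 1)).le
  have hP1inv : (PP p d 1)⁻¹ ≤ 15/13 * (PP p d 0)⁻¹ := by
    have hE := E1 hp d
    have h := (div_le_div_iff₀ (hPpos 1) (hPpos 0)).2
      (by linarith : (1:ℝ) * PP p d 0 ≤ 15/13 * PP p d 1)
    rw [one_div, div_eq_mul_inv] at h
    exact h
  have hterm : ∀ i ∈ Finset.Ico 2 (d+2),
      (PP p d i)⁻¹ ≤ 40 * ((16:ℝ)⁻¹)^i * (PP p d 0)⁻¹ := by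
    intro i hi
    rw [Finset.mem_Ico] at hi
    have hE := E2 hp (show 2 ≤ i by omega) (show i ≤ d+1 by omega)
    have hg : ((16:ℝ)⁻¹)^(i-1) = 16 * ((16:ℝ)⁻¹)^i := by
      obtain ⟨t, rfl⟩ : ∃ t, i = t+1 := ⟨i-1, by omega⟩
      rw [pow_succ, show t+1-1 = t by omega]
      ring_nf
    rw [hg] at hE
    have h := (div_le_div_iff₀ (hPpos i) (hPpos 0)).2
      (by nlinarith : (1:ℝ) * PP p d 0 ≤ (40 * ((16:ℝ)⁻¹)^i) * PP p d i)
    rw [one_div, div_eq_mul_inv] at h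
    exact h
  have hSum : ∑ i ∈ Finset.Ico 2 (d+2), (PP p d i)⁻¹ ≤ 1/6 * (PP p d 0)⁻¹ := by
    calc ∑ i ∈ Finset.Ico 2 (d+2), (PP p d i)⁻¹
        ≤ ∑ i ∈ Finset.Ico 2 (d+2), 40 * ((16:ℝ)⁻¹)^i * (PP p d 0)⁻¹ :=
          Finset.sum_le_sum hterm
    _ = 40 * (PP p d 0)⁻¹ * ∑ i ∈ Finset.Ico 2 (d+2), ((16:ℝ)⁻¹)^i := by
          rw [Finset.mul_sum]; refine Finset.sum_congr rfl fun i _ => by ring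
    _ ≤ 40 * (PP p d 0)⁻¹ * (((16:ℝ)⁻¹)^2 * (16/15)) := by
          have := geo_fwd 2 (d+2)
          nlinarith [hP0inv]
    _ = 1/6 * (PP p d 0)⁻¹ := by norm_num; ring
  linarith [hmain, hB0, hB1, hP1inv, hSum, hP0inv]
end

section
/- Let s: K → F_p^n be a linear map defined on a k-dimensional subspace K of F_p^n, and for D = p^h let Q_s(D) be the probability that a uniformly random linear map f: F_p^n → F_p^n with |ker(f)| = D extends s. Then Q_s, as a function of D on the points D = p^0, …, p^n, agrees with a polynomial in D of degree at most k. -/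
/-!
A map `f` extending `s` is determined by the images `v` of a basis of a complement of `K`, and
`range f = range s ⊔ span v`; the denominator is the case `K = 0`. Both counts are thus numbers
`T_U(m, t)` of `m`-tuples `v` with `dim (U ⊔ span v) = t`. Adding one vector at a time gives a
recursion in `m`, solved by `T_U(m, j + d) · L(d, d) = q ^ (j m) · L(m, d) · L(n - j, d)` where
`j = dim U` and `L(N, a) = ∏_{i < a} (q ^ N - q ^ i)`. For `j = rank s` and `D = q ^ h` the
quotient of the two counts collapses to
`κ · ∏_{u < j} (q ^ n - q ^ u D) · ∏_{u < k - j} (D - q ^ u)` with `κ` independent of `h`.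
-/

open Finset Module Submodule

section qFalling

variable {R : Type*} [CommRing R]

/-- For a prime power `q`, the number of linearly independent `a`-tuples in `𝔽_q ^ N`. -/
def qFalling (q : R) (N a : ℕ) : R := ∏ i ∈ range a, (q ^ N - q ^ i)

variable (q : R)

lemma qFalling_zero (N : ℕ) : qFalling q N 0 = 1 := prod_range_zero _

lemma qFalling_succ (N a : ℕ) : qFalling q N (a + 1) = qFalling q N a * (q ^ N - q ^ a) :=
  prod_range_succ _ _

lemma qFalling_succ_succ (N a : ℕ) :
    qFalling q (N + 1) (a + 1) = (q ^ (N + 1) - 1) * q ^ a * qFalling q N a := by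
  have h : ∀ i ∈ range a, q ^ (N + 1) - q ^ (i + 1) = q * (q ^ N - q ^ i) := fun i _ => by ring
  rw [qFalling, prod_range_succ', prod_congr rfl h, prod_mul_distrib, prod_const, card_range,
    qFalling]
  ring

lemma qFalling_add (N a b : ℕ) :
    qFalling q (a + N) (a + b) = qFalling q (a + N) a * q ^ (a * b) * qFalling q N b := by
  have h : ∀ i ∈ range b, q ^ (a + N) - q ^ (a + i) = q ^ a * (q ^ N - q ^ i) :=
    fun i _ => by ring
  rw [qFalling, prod_range_add, prod_congr rfl h, prod_mul_distrib, prod_const, card_range,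
    qFalling, qFalling, pow_mul]
  ring

lemma qFalling_eq_zero_of_lt {N a : ℕ} (h : N < a) : qFalling q N a = 0 :=
  prod_eq_zero (mem_range.2 h) (sub_self _)

lemma prod_range_pow_sub_pow_mul (N b a : ℕ) :
    ∏ u ∈ range a, (q ^ (N + b) - q ^ u * q ^ b) = q ^ (b * a) * qFalling q N a := by
  have h : ∀ i ∈ range a, q ^ (N + b) - q ^ i * q ^ b = q ^ b * (q ^ N - q ^ i) :=
    fun i _ => by ring
  rw [prod_congr rfl h, prod_mul_distrib, prod_const, card_range, pow_mul, qFalling]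

end qFalling

lemma qFalling_ne_zero {R : Type*} [CommRing R] [LinearOrder R] [IsStrictOrderedRing R]
    {q : R} (hq : 1 < q) {N a : ℕ} (h : a ≤ N) : qFalling q N a ≠ 0 :=
  prod_ne_zero_iff.2 fun i hi =>
    sub_ne_zero.2 (pow_lt_pow_right₀ hq (by simp at hi; omega)).ne'

section TupleCount

variable {F V : Type*} [Field F] [AddCommGroup V] [Module F V] {R : Type*} [CommRing R]

lemma sup_span_range_cons (U : Submodule F V) {m : ℕ} (x : V) (w : Fin m → V) :
    U ⊔ span F (Set.range (Fin.cons x w : Fin (m + 1) → V)) =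
      U ⊔ span F (Set.range w) ⊔ span F {x} := by
  rw [Fin.range_cons, span_insert, sup_comm (span F {x}), sup_assoc]

noncomputable def tupleCount (U : Submodule F V) (m t : ℕ) : ℕ :=
  Nat.card {v : Fin m → V // finrank F ↥(U ⊔ span F (Set.range v)) = t}

lemma tupleCount_zero_of_ne (U : Submodule F V) {t : ℕ} (ht : t ≠ finrank F U) :
    tupleCount U 0 t = 0 := by
  rw [tupleCount, Nat.card_eq_zero]
  left
  refine ⟨fun v => ht ?_⟩
  rw [← v.2, Set.range_eq_empty, span_empty, sup_bot_eq]

variable [Module.Finite F V]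

lemma finrank_sup_span_singleton_eq_ite (W : Submodule F V) (x : V) [Decidable (x ∈ W)] :
    finrank F ↥(W ⊔ span F {x}) = if x ∈ W then finrank F W else finrank F W + 1 := by
  split_ifs with hx
  · rw [sup_eq_left.2 ((span_singleton_le_iff_mem x W).2 hx)]
  · exact finrank_sup_span_singleton hx

lemma tupleCount_of_lt (U : Submodule F V) (m : ℕ) {t : ℕ} (ht : t < finrank F U) :
    tupleCount U m t = 0 := by
  rw [tupleCount, Nat.card_eq_zero]
  left
  refine ⟨fun v => ?_⟩
  have := finrank_mono (le_sup_left : U ≤ U ⊔ span F (Set.range v.1))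
  have := v.2
  omega

lemma natCard_mem_submodule (W : Submodule F V) :
    (Nat.card {x : V // x ∈ W} : R) = (Nat.card F : R) ^ finrank F W := by
  rw [← Nat.cast_pow, ← Module.natCard_eq_pow_finrank]

lemma tupleCount_finrank (U : Submodule F V) (m : ℕ) :
    tupleCount U m (finrank F U) = Nat.card F ^ (finrank F U * m) := by
  have hiff : ∀ v : Fin m → V,
      finrank F ↥(U ⊔ span F (Set.range v)) = finrank F U ↔ ∀ i, v i ∈ U := by
    intro v
    calc finrank F ↥(U ⊔ span F (Set.range v)) = finrank F U
          ↔ U ⊔ span F (Set.range v) = U :=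
          ⟨fun h => (eq_of_le_of_finrank_eq le_sup_left h.symm).symm, fun h => by rw [h]⟩
      _ ↔ ∀ i, v i ∈ U := by rw [sup_eq_left, span_le, Set.range_subset_iff]; rfl
  rw [tupleCount, Nat.card_congr ((Equiv.subtypeEquivRight hiff).trans Equiv.subtypePiEquivPi),
    Nat.card_pi, Finset.prod_const, Finset.card_univ, Fintype.card_fin, pow_mul]
  simp only [← Module.natCard_eq_pow_finrank]

variable [Finite F]

lemma natCard_notMem_submodule (W : Submodule F V) :
    (Nat.card {x : V // x ∉ W} : R) =
      (Nat.card F : R) ^ finrank F V - (Nat.card F : R) ^ finrank F W := by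
  classical
  have := Module.finite_of_finite F (M := V)
  have h := Nat.card_congr (Equiv.sumCompl (· ∈ W))
  rw [Nat.card_sum, Module.natCard_eq_pow_finrank (K := F) (V := V)] at h
  rw [← natCard_mem_submodule W, eq_sub_iff_add_eq, add_comm, ← Nat.cast_pow, ← h]
  push_cast
  rfl

lemma natCard_finrank_sup_span_singleton_eq_succ (W : Submodule F V) (t : ℕ) :
    (Nat.card {x : V // finrank F ↥(W ⊔ span F {x}) = t + 1} : R) =
      (if finrank F W = t + 1 then (Nat.card F : R) ^ (t + 1) else 0) +
        (if finrank F W = t then (Nat.card F : R) ^ finrank F V - (Nat.card F : R) ^ t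
          else 0) := by
  classical
  simp_rw [finrank_sup_span_singleton_eq_ite]
  by_cases h1 : finrank F W = t + 1
  · have hiff : ∀ x, (if x ∈ W then finrank F W else finrank F W + 1) = t + 1 ↔ x ∈ W := by
      intro x; split_ifs <;> simp_all
    rw [Nat.card_congr (Equiv.subtypeEquivRight hiff), natCard_mem_submodule, h1]
    simp
  by_cases h2 : finrank F W = t
  · have hiff : ∀ x, (if x ∈ W then finrank F W else finrank F W + 1) = t + 1 ↔ x ∉ W := by
      intro x; split_ifs <;> simp_all
    rw [Nat.card_congr (Equiv.subtypeEquivRight hiff), natCard_notMem_submodule, h2]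
    simp
  · have hempty : ∀ x, (if x ∈ W then finrank F W else finrank F W + 1) ≠ t + 1 := by
      intro x; split_ifs <;> omega
    simp [h1, h2, hempty]

lemma tupleCount_succ_succ (U : Submodule F V) (m t : ℕ) :
    (tupleCount U (m + 1) (t + 1) : R) =
      (Nat.card F : R) ^ (t + 1) * tupleCount U m (t + 1) +
        ((Nat.card F : R) ^ finrank F V - (Nat.card F : R) ^ t) * tupleCount U m t := by
  classical
  have : Finite V := Module.finite_of_finite F
  have := Fintype.ofFinite V
  have sum_ite (s : ℕ) (c : R) : ∑ w : Fin m → V,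
      (if finrank F ↥(U ⊔ span F (Set.range w)) = s then c else 0) = c * tupleCount U m s := by
    rw [← sum_filter, sum_const, nsmul_eq_mul, tupleCount, Nat.card_eq_fintype_card,
      Fintype.card_subtype, mul_comm]
  let e : {v : Fin (m + 1) → V // finrank F ↥(U ⊔ span F (Set.range v)) = t + 1} ≃
      Σ w : Fin m → V,
        {x : V // finrank F ↥(U ⊔ span F (Set.range w) ⊔ span F {x}) = t + 1} :=
    (((Fin.consEquiv fun _ => V).symm.trans (Equiv.prodComm _ _)).subtypeEquiv fun v => by
        show _ ↔ finrank F ↥(U ⊔ span F (Set.range (Fin.tail v)) ⊔ span F {v 0}) = t + 1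
        rw [← sup_span_range_cons, Fin.cons_self_tail]).trans
      (Equiv.subtypeProdEquivSigmaSubtype fun w x =>
        finrank F ↥(U ⊔ span F (Set.range w) ⊔ span F {x}) = t + 1)
  rw [tupleCount, Nat.card_congr e, Nat.card_sigma]
  push_cast
  simp_rw [natCard_finrank_sup_span_singleton_eq_succ, sum_add_distrib, sum_ite]

lemma tupleCount_mul_qFalling (U : Submodule F V) (m d : ℕ) :
    (tupleCount U m (finrank F U + d) : R) * qFalling (Nat.card F : R) d d =
      (Nat.card F : R) ^ (finrank F U * m) * qFalling (Nat.card F : R) m d *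
        qFalling (Nat.card F : R) (finrank F V - finrank F U) d := by
  set q : R := (Nat.card F : R) with hq
  set j := finrank F U
  obtain ⟨N, hN⟩ : ∃ N, finrank F V = j + N :=
    ⟨_, (Nat.add_sub_of_le (finrank_le U)).symm⟩
  rw [hN, Nat.add_sub_cancel_left]
  induction m generalizing d with
  | zero =>
    cases d with
    | zero => simp [tupleCount_finrank, qFalling_zero, j]
    | succ d => simp [tupleCount_zero_of_ne U (by omega : j + (d + 1) ≠ j),
        qFalling_eq_zero_of_lt q (Nat.succ_pos d)]
  | succ m ih =>
    cases d with
    | zero => simp [tupleCount_finrank, qFalling_zero, q, j]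
    | succ d =>
      have ih₁ := ih (d + 1)
      have ih₀ := ih d
      rw [← add_assoc, tupleCount_succ_succ, hN, ← hq]
      rw [← add_assoc, qFalling_succ q m, qFalling_succ q N] at ih₁
      rw [qFalling_succ_succ q m, qFalling_succ q N, pow_add q j N]
      linear_combination q ^ (j + d + 1) * ih₁ +
        (q ^ j * q ^ N - q ^ (j + d)) * tupleCount U m (j + d) * qFalling_succ_succ q d d +
        (q ^ j * q ^ N - q ^ (j + d)) * (q ^ (d + 1) - 1) * q ^ d * ih₀

lemma tupleCount_ne_zero (U : Submodule F V) {m d : ℕ} (hdm : d ≤ m)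
    (hd : finrank F U + d ≤ finrank F V) : tupleCount U m (finrank F U + d) ≠ 0 := by
  have hq : 1 < (Nat.card F : ℝ) := Nat.one_lt_cast.2 Finite.one_lt_card
  intro h0
  have := tupleCount_mul_qFalling (R := ℝ) U m d
  rw [h0, Nat.cast_zero, zero_mul, eq_comm] at this
  exact mul_ne_zero (mul_ne_zero (pow_ne_zero _ (by positivity)) (qFalling_ne_zero hq hdm))
    (qFalling_ne_zero hq (by omega)) this

end TupleCount

section Extensions

variable {F V W : Type*} [Field F] [AddCommGroup V] [Module F V] [AddCommGroup W] [Module F W]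

noncomputable def extensionsEquivOfIsCompl {K L : Submodule F V} (h : IsCompl K L)
    (s : K →ₗ[F] W) :
    (L →ₗ[F] W) ≃ {f : V →ₗ[F] W // ∀ x : K, f x = s x} where
  toFun ψ := ⟨LinearMap.ofIsCompl h s ψ, LinearMap.ofIsCompl_apply_left h⟩
  invFun f := f.1 ∘ₗ L.subtype
  left_inv ψ := by ext x; exact LinearMap.ofIsCompl_apply_right h x
  right_inv f := Subtype.ext (LinearMap.ofIsCompl_eq h (fun u => (f.2 u).symm) fun _ => rfl)

lemma natCard_extensions [Module.Finite F V] (K : Submodule F V) (s : K →ₗ[F] W)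
    (P : Submodule F W → Prop) :
    Nat.card {f : V →ₗ[F] W // P (LinearMap.range f) ∧ ∀ x : K, f x = s x} =
      Nat.card {v : Fin (finrank F V - finrank F K) → W //
        P (LinearMap.range s ⊔ span F (Set.range v))} := by
  obtain ⟨L, hL⟩ := K.exists_isCompl
  have hd : finrank F L = finrank F V - finrank F K := by
    have := finrank_add_eq_of_isCompl hL
    omega
  let b := Module.finBasisOfFinrankEq F L hd
  refine Nat.card_congr <| ((Equiv.subtypeEquivRight fun _ => and_comm).trans
    (Equiv.subtypeSubtypeEquivSubtypeInter _ _).symm).trans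
    (((b.constr F).toEquiv.trans (extensionsEquivOfIsCompl hL s)).subtypeEquiv fun v => ?_).symm
  simp [extensionsEquivOfIsCompl, LinearMap.range_ofIsCompl, Module.Basis.constr_range]

variable [Module.Finite F V]

lemma natCard_ker_extensions (K : Submodule F V) (s : K →ₗ[F] W) {h : ℕ}
    (hh : h ≤ finrank F V) :
    Nat.card {f : V →ₗ[F] W // finrank F (LinearMap.ker f) = h ∧ ∀ x : K, f x = s x} =
      tupleCount (LinearMap.range s) (finrank F V - finrank F K) (finrank F V - h) := by
  rw [tupleCount, ← natCard_extensions K s (finrank F · = finrank F V - h)]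
  refine Nat.card_congr (Equiv.subtypeEquivRight fun f => ?_)
  have := LinearMap.finrank_range_add_finrank_ker f
  rw [and_congr_left_iff]
  omega

lemma natCard_ker {h : ℕ} (hh : h ≤ finrank F V) :
    Nat.card {f : V →ₗ[F] W // finrank F (LinearMap.ker f) = h} =
      tupleCount (⊥ : Submodule F W) (finrank F V) (finrank F V - h) := by
  have := natCard_ker_extensions (⊥ : Submodule F V) (0 : _ →ₗ[F] W) hh
  rw [LinearMap.range_zero, finrank_bot, Nat.sub_zero] at this
  rw [← this]
  refine Nat.card_congr (Equiv.subtypeEquivRight fun f => (and_iff_left fun x => ?_).symm)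
  rw [(Submodule.mem_bot F).1 x.2, map_zero, LinearMap.zero_apply]

end Extensions

open Polynomial

noncomputable def extensionConst (q : ℝ) (n k j : ℕ) : ℝ :=
  q ^ ((2 * j + (k - j)) * (n - k) + j * (k - j)) * qFalling q (n - k) (n - k) *
    qFalling q (n - j) (n - j) / qFalling q n n ^ 2

/-- Its roots `q ^ (n - u)`, `u < j`, and `q ^ u`, `u < k - j`, are the kernel sizes `D = q ^ h`
for which no extension exists: those with `n - h < j = rank s` or with `h < k - j`. -/
noncomputable def extensionPoly (q : ℝ) (n k j : ℕ) : ℝ[X] :=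
  C (extensionConst q n k j) *
    (∏ u ∈ range j, (C (q ^ n) - C (q ^ u) * X)) * ∏ u ∈ range (k - j), (X - C (q ^ u))

lemma natDegree_extensionPoly (q : ℝ) (n : ℕ) {k j : ℕ} (hjk : j ≤ k) :
    (extensionPoly q n k j).natDegree ≤ k := by
  have h₁ : (∏ u ∈ range j, (C (q ^ n) - C (q ^ u) * X)).natDegree ≤ j :=
    (natDegree_prod_le _ _).trans <| (sum_le_card_nsmul _ _ 1 fun _ _ => by compute_degree).trans
      (by simp)
  have h₂ : (∏ u ∈ range (k - j), (X - C (q ^ u))).natDegree ≤ k - j :=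
    (natDegree_prod_le _ _).trans <|
      (sum_le_card_nsmul _ _ 1 fun _ _ => natDegree_X_sub_C_le _).trans (by simp)
  calc (extensionPoly q n k j).natDegree
      ≤ (C _ * ∏ u ∈ range j, (C (q ^ n) - C (q ^ u) * X)).natDegree +
          (∏ u ∈ range (k - j), (X - C (q ^ u))).natDegree := natDegree_mul_le
    _ ≤ j + (k - j) := add_le_add ((natDegree_C_mul_le _ _).trans h₁) h₂
    _ = k := by omega

lemma eval_extensionPoly (q : ℝ) {n h : ℕ} (k j : ℕ) (hh : h ≤ n) :
    (extensionPoly q n k j).eval (q ^ h) =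
      extensionConst q n k j * (q ^ (h * j) * qFalling q (n - h) j) * qFalling q h (k - j) := by
  rw [← prod_range_pow_sub_pow_mul, Nat.sub_add_cancel hh]
  simp [extensionPoly, eval_prod, qFalling]

/-- The generic case of `eval_extensionPoly_mul_tupleCount`, written with `k = j + c`,
`h = c + e` and `n - h = j + d` so that no subtraction occurs. -/
lemma extensionConst_mul_eq (q : ℝ) (hq : 1 < q) (j c d e : ℕ) {TU TB : ℝ}
    (hU : TU * qFalling q d d =
      q ^ (j * (d + e)) * qFalling q (d + e) d * qFalling q (c + d + e) d)
    (hB : TB * qFalling q (j + d) (j + d) =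
      qFalling q (j + c + d + e) (j + d) * qFalling q (j + c + d + e) (j + d)) :
    extensionConst q (j + c + d + e) (j + c) j * (q ^ ((c + e) * j) * qFalling q (j + d) j) *
      qFalling q (c + e) c * TB = TU := by
  have hne : ∀ a, qFalling q a a ≠ 0 := fun a => qFalling_ne_zero hq le_rfl
  have := hne d
  have := hne (j + d)
  have := hne (j + c + d + e)
  rw [eq_div_of_mul_eq (hne _) hU, eq_div_of_mul_eq (hne _) hB, extensionConst,
    show j + c + d + e - (j + c) = d + e by omega, show j + c + d + e - j = c + d + e by omega,
    show j + c - j = c by omega]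
  field_simp
  have e₁ := qFalling_add q d j d
  have e₂ := qFalling_add q (c + e) (j + d) (c + e)
  have e₃ := qFalling_add q e c e
  have e₄ := qFalling_add q e d e
  have e₅ := qFalling_add q (c + e) d (c + e)
  rw [show j + d + (c + e) = j + c + d + e by ring] at e₂
  rw [show d + (c + e) = c + d + e by ring] at e₅
  rw [e₁, e₂, e₄, e₅, e₃]
  ring
section Counts

variable {F V : Type*} [Field F] [Finite F] [AddCommGroup V] [Module F V] [Module.Finite F V]

lemma eval_extensionPoly_mul_tupleCount (U : Submodule F V) {k h : ℕ} (hjk : finrank F U ≤ k)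
    (hkn : k ≤ finrank F V) (hhn : h ≤ finrank F V) :
    (extensionPoly (Nat.card F) (finrank F V) k (finrank F U)).eval ((Nat.card F : ℝ) ^ h) *
        tupleCount (⊥ : Submodule F V) (finrank F V) (finrank F V - h) =
      tupleCount U (finrank F V - k) (finrank F V - h) := by
  have hq : 1 < (Nat.card F : ℝ) := Nat.one_lt_cast.2 Finite.one_lt_card
  rw [eval_extensionPoly _ k _ hhn]
  rcases lt_or_ge (finrank F V - h) (finrank F U) with hrank | hrank
  · rw [tupleCount_of_lt U _ hrank, qFalling_eq_zero_of_lt _ hrank]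
    simp
  have hU :=
    tupleCount_mul_qFalling (R := ℝ) U (finrank F V - k) (finrank F V - h - finrank F U)
  have hB :=
    tupleCount_mul_qFalling (R := ℝ) (⊥ : Submodule F V) (finrank F V) (finrank F V - h)
  rw [Nat.add_sub_cancel' hrank] at hU
  simp only [finrank_bot, zero_add, zero_mul, pow_zero, one_mul, Nat.sub_zero] at hB
  generalize (Nat.card F : ℝ) = q at *
  generalize finrank F V = n at *
  generalize finrank F U = j at *
  rcases lt_or_ge h (k - j) with hker | hker
  · rw [qFalling_eq_zero_of_lt q (by omega : n - k < n - h - j), mul_zero, zero_mul,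
      mul_eq_zero_iff_right (qFalling_ne_zero hq le_rfl)] at hU
    simp [hU, qFalling_eq_zero_of_lt q hker]
  obtain ⟨c, rfl⟩ : ∃ c, k = j + c := ⟨k - j, by omega⟩
  obtain ⟨e, rfl⟩ : ∃ e, h = c + e := ⟨h - c, by omega⟩
  obtain ⟨d, rfl⟩ : ∃ d, n = j + c + d + e := ⟨n - j - c - e, by omega⟩
  simp only [show j + c + d + e - (j + c) = d + e by omega, show j + c - j = c by omega,
    show j + c + d + e - (c + e) = j + d by omega, show j + d - j = d by omega,
    show j + c + d + e - j = c + d + e by omega] at hU hB ⊢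
  exact extensionConst_mul_eq q hq j c d e hU hB

lemma eval_extensionPoly_eq_div (U : Submodule F V) {k h : ℕ} (hjk : finrank F U ≤ k)
    (hkn : k ≤ finrank F V) (hhn : h ≤ finrank F V) :
    (extensionPoly (Nat.card F) (finrank F V) k (finrank F U)).eval ((Nat.card F : ℝ) ^ h) =
      (tupleCount U (finrank F V - k) (finrank F V - h) : ℝ) /
        tupleCount (⊥ : Submodule F V) (finrank F V) (finrank F V - h) := by
  have hB := tupleCount_ne_zero (⊥ : Submodule F V) (m := finrank F V) (Nat.sub_le _ h)
    (by rw [finrank_bot, zero_add]; exact Nat.sub_le _ h)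
  rw [finrank_bot, zero_add] at hB
  exact eq_div_of_mul_eq (Nat.cast_ne_zero.2 hB)
    (eval_extensionPoly_mul_tupleCount U hjk hkn hhn)

end Counts

open Module LinearMap in
theorem stmt_18_general (p n k : ℕ)
    (F : Type) [Field F] [Fintype F] (hF : Fintype.card F = p)
    (K : Submodule F (Fin n → F)) (hK : finrank F K = k)
    (s : K →ₗ[F] (Fin n → F)) :
    ∃ q : Polynomial ℝ, q.natDegree ≤ k ∧
      ∀ h : ℕ, h ≤ n →
        q.eval ((p : ℝ) ^ h) =
          (Nat.card {f : (Fin n → F) →ₗ[F] (Fin n → F) //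
              finrank F (ker f) = h ∧ ∀ x : K, f x = s x} : ℝ) /
            (Nat.card {f : (Fin n → F) →ₗ[F] (Fin n → F) //
              finrank F (ker f) = h} : ℝ) := by
  have hn : finrank F (Fin n → F) = n := finrank_fin_fun F
  have hkn : k ≤ finrank F (Fin n → F) := hK ▸ Submodule.finrank_le K
  have hjk : finrank F (LinearMap.range s) ≤ k := hK ▸ finrank_range_le s
  refine ⟨extensionPoly p n k (finrank F (LinearMap.range s)), natDegree_extensionPoly _ _ hjk,
    fun h hh => ?_⟩
  have hh' : h ≤ finrank F (Fin n → F) := hh.trans hn.ge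
  have key := eval_extensionPoly_eq_div (LinearMap.range s) hjk hkn hh'
  rw [natCard_ker_extensions K s hh', natCard_ker hh', hK, hn]
  rwa [hn, Nat.card_eq_fintype_card, hF] at key

open Module LinearMap in
theorem stmt_18 (p n k : ℕ) (hp : IsPrimePow p)
    (F : Type) [Field F] [Fintype F] (hF : Fintype.card F = p)
    (K : Submodule F (Fin n → F)) (hK : finrank F K = k)
    (s : K →ₗ[F] (Fin n → F)) :
    ∃ q : Polynomial ℝ, q.natDegree ≤ k ∧
      ∀ h : ℕ, h ≤ n →
        q.eval ((p : ℝ) ^ h) =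
          (Nat.card {f : (Fin n → F) →ₗ[F] (Fin n → F) //
              finrank F (ker f) = h ∧ ∀ x : K, f x = s x} : ℝ) /
            (Nat.card {f : (Fin n → F) →ₗ[F] (Fin n → F) //
              finrank F (ker f) = h} : ℝ) :=
  stmt_18_general p n k F hF K hK s
end
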